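/- Let p_1 ≥ p_2 ≥ … ≥ p_K > p be K + 1 numbers in (0,1) and let Δ_k = p_k − p for 1 ≤ k ≤ K. Then Δ_1 / kl(p, p_1) + Σ_{k=2}^K Δ_k · (1 / kl(p, p_k) − 1 / kl(p, p_{k−1})) ≤ Δ_K · (1 + log(1/Δ_K)) / kl(p, p_K). -/

import Mathlib

/-!
Abel summation turns the left-hand side into
`Δ_K / kl_K + Σ_{k=2}^K (Δ_{k-1} - Δ_k) / kl_{k-1}`, where `kl_k = kl(p, p_k)`.
Since `kl(p, ·)` is convex and vanishes at `p`, its slope `kl(p, x) / (x - p)` increases on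
`(p, 1)`, so `1 / kl_{k-1} ≤ Δ_K / (kl_K Δ_{k-1})`. Together with
`(Δ_{k-1} - Δ_k) / Δ_{k-1} ≤ log Δ_{k-1} - log Δ_k` the sum telescopes to at most
`Δ_K / kl_K · (log Δ_1 - log Δ_K)`, and `log Δ_1 ≤ 0`.
-/

noncomputable def klBer (p q : ℝ) : ℝ :=
  p * Real.log (p / q) + (1 - p) * Real.log ((1 - p) / (1 - q))

open Real Finset

theorem klBer_self (p : ℝ) : klBer p p = 0 := by
  simp [klBer]

theorem klBer_pos {p q : ℝ} (hp : p ∈ Set.Ioo (0 : ℝ) 1) (hq : q ∈ Set.Ioo (0 : ℝ) 1)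
    (hpq : p ≠ q) : 0 < klBer p q := by
  obtain ⟨hp0, hp1⟩ := hp
  obtain ⟨hq0, hq1⟩ := hq
  have hlog_q : log (q / p) < q / p - 1 :=
    log_lt_sub_one_of_pos (by positivity) (div_ne_one_of_ne hpq.symm)
  have hlog_one_sub_q : log ((1 - q) / (1 - p)) ≤ (1 - q) / (1 - p) - 1 :=
    log_le_sub_one_of_pos (div_pos (by linarith) (by linarith))
  have hp_mul : p * (q / p - 1) = q - p := by field_simp
  have hp_mul' : (1 - p) * ((1 - q) / (1 - p) - 1) = p - q := by field_simp; ring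
  rw [klBer, ← inv_div q p, ← inv_div (1 - q), log_inv, log_inv]
  linarith [mul_lt_mul_of_pos_left hlog_q hp0, mul_le_mul_of_nonneg_left hlog_one_sub_q (sub_nonneg.2 hp1.le)]

theorem convexOn_klBer {p : ℝ} (hp : p ∈ Set.Ioo (0 : ℝ) 1) :
    ConvexOn ℝ (Set.Ioo 0 1) (klBer p) := by
  obtain ⟨hp0, hp1⟩ := hp
  have hlog : ConvexOn ℝ (Set.Ioi 0) (fun x => -log x) := strictConcaveOn_log_Ioi.concaveOn.neg
  have hlog_left : ConvexOn ℝ (Set.Ioo 0 1) (fun x => -log x) :=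
    hlog.subset Set.Ioo_subset_Ioi_self (convex_Ioo 0 1)
  have hlog_right : ConvexOn ℝ (Set.Ioo 0 1) (fun x => -log (1 - x)) :=
    (hlog.comp_affineMap (AffineMap.const ℝ ℝ 1 - AffineMap.id ℝ ℝ)).subset
      (fun x hx => sub_pos.2 hx.2) (convex_Ioo 0 1)
  refine (((hlog_left.smul hp0.le).add (hlog_right.smul (sub_nonneg.2 hp1.le))).add_const
    (p * log p + (1 - p) * log (1 - p))).congr fun x ⟨hx0, hx1⟩ => ?_
  simp only [klBer, smul_eq_mul, Pi.add_apply]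
  rw [log_div hp0.ne' hx0.ne', log_div (by linarith) (by linarith)]
  ring

theorem sum_Icc_two_sub_pred (f : ℕ → ℝ) {K : ℕ} (hK : 1 ≤ K) :
    ∑ k ∈ Icc 2 K, (f k - f (k - 1)) = f K - f 1 := by
  induction K, hK using Nat.le_induction with
  | base => simp
  | succ n hn ih =>
    rw [sum_Icc_succ_top (by omega), ih]
    simp

theorem sum_abel_peeling (Δ c : ℕ → ℝ) {K : ℕ} (hK : 1 ≤ K) :
    Δ 1 / c 1 + ∑ k ∈ Icc 2 K, Δ k * (1 / c k - 1 / c (k - 1)) =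
      Δ K / c K + ∑ k ∈ Icc 2 K, (Δ (k - 1) - Δ k) / c (k - 1) := by
  have hsplit : ∀ k, Δ k * (1 / c k - 1 / c (k - 1)) =
      (Δ k / c k - Δ (k - 1) / c (k - 1)) + (Δ (k - 1) - Δ k) / c (k - 1) := fun k => by ring
  rw [sum_congr rfl fun k _ => hsplit k, sum_add_distrib,
    sum_Icc_two_sub_pred (fun k => Δ k / c k) hK]
  ring

theorem sub_div_le_log_sub_div {x y c s : ℝ} (hy : 0 < y) (hyx : y ≤ x) (hs : 0 < s)
    (hsc : s ≤ c / x) : (x - y) / c ≤ (log x - log y) / s := by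
  have hx : 0 < x := hy.trans_le hyx
  calc (x - y) / c ≤ (x - y) / (s * x) :=
        div_le_div_of_nonneg_left (sub_nonneg.2 hyx) (by positivity) ((le_div_iff₀ hx).1 hsc)
    _ = (1 - (x / y)⁻¹) / s := by field_simp
    _ ≤ (log x - log y) / s := by
        refine div_le_div_of_nonneg_right ?_ hs.le
        rw [← log_div hx.ne' hy.ne']
        exact one_sub_inv_le_log_of_pos (by positivity)

theorem peeling_sum_le {Δ c : ℕ → ℝ} {K : ℕ} (hK : 1 ≤ K)
    (hanti : AntitoneOn Δ (Set.Icc 1 K)) (hΔK : 0 < Δ K) (hΔ1 : Δ 1 ≤ 1) (hcK : 0 < c K)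
    (hslope : ∀ k ∈ Set.Icc 1 K, c K / Δ K ≤ c k / Δ k) :
    Δ 1 / c 1 + ∑ k ∈ Icc 2 K, Δ k * (1 / c k - 1 / c (k - 1)) ≤
      Δ K * (1 + log (1 / Δ K)) / c K := by
  have hs : 0 < c K / Δ K := div_pos hcK hΔK
  have hterm : ∀ k ∈ Icc 2 K,
      (Δ (k - 1) - Δ k) / c (k - 1) ≤ (log (Δ (k - 1)) - log (Δ k)) / (c K / Δ K) := by
    intro k hk
    obtain ⟨hk2, hkK⟩ := mem_Icc.1 hk
    have hk : k ∈ Set.Icc 1 K := ⟨by omega, hkK⟩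
    have hk' : k - 1 ∈ Set.Icc 1 K := ⟨by omega, by omega⟩
    exact sub_div_le_log_sub_div (hΔK.trans_le (hanti hk ⟨hK, le_rfl⟩ hkK))
      (hanti hk' hk (by omega)) hs (hslope _ hk')
  have htelescope :
      ∑ k ∈ Icc 2 K, (log (Δ (k - 1)) - log (Δ k)) = log (Δ 1) - log (Δ K) := by
    have := sum_Icc_two_sub_pred (fun k => -log (Δ k)) hK
    simpa only [sub_neg_eq_add, neg_add_eq_sub] using this
  have hlog1 : log (Δ 1) ≤ 0 :=
    log_nonpos (hΔK.le.trans (hanti ⟨le_rfl, hK⟩ ⟨hK, le_rfl⟩ hK)) hΔ1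
  rw [sum_abel_peeling Δ c hK]
  calc Δ K / c K + ∑ k ∈ Icc 2 K, (Δ (k - 1) - Δ k) / c (k - 1)
      ≤ Δ K / c K + (log (Δ 1) - log (Δ K)) / (c K / Δ K) := by
        rw [← htelescope, sum_div]
        exact add_le_add_right (sum_le_sum hterm) _
    _ ≤ Δ K / c K + (-log (Δ K)) / (c K / Δ K) := by gcongr; linarith
    _ = Δ K * (1 + log (1 / Δ K)) / c K := by
        rw [one_div, log_inv]
        field_simp

/-- KL-UCB peeling lemma, Lemma 2 of the paper: for
`p_1 ≥ p_2 ≥ … ≥ p_K > p` in `(0,1)` and `Δ_k = p_k − p`,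
`Δ_1 / kl(p, p_1) + Σ_{k=2}^K Δ_k (1/kl(p, p_k) − 1/kl(p, p_{k−1}))
  ≤ Δ_K (1 + log(1/Δ_K)) / kl(p, p_K)`. -/
theorem klucb_peeling (p : ℝ) (hp : p ∈ Set.Ioo (0 : ℝ) 1)
    (K : ℕ) (hK : 1 ≤ K) (q : ℕ → ℝ)
    (hq : ∀ k, 1 ≤ k → k ≤ K → q k ∈ Set.Ioo (0 : ℝ) 1)
    (hmono : ∀ k, 1 ≤ k → k < K → q (k + 1) ≤ q k)
    (hgt : p < q K) :
    (q 1 - p) / klBer p (q 1) +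
        (∑ k ∈ Finset.Icc 2 K, (q k - p) * (1 / klBer p (q k) - 1 / klBer p (q (k - 1)))) ≤
      (q K - p) * (1 + Real.log (1 / (q K - p))) / klBer p (q K) := by
  have hanti : AntitoneOn q (Set.Icc 1 K) :=
    antitoneOn_of_succ_le Set.ordConnected_Icc fun k _ hk hk' => by
      rw [Order.succ_eq_add_one] at hk' ⊢
      exact hmono k hk.1 hk'.2
  have hqK : q K ∈ Set.Ioo (0 : ℝ) 1 := hq K hK le_rfl
  refine peeling_sum_le (Δ := fun k => q k - p) (c := fun k => klBer p (q k)) hK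
    (fun i hi j hj hij => sub_le_sub_right (hanti hi hj hij) p)
    (sub_pos.2 hgt) (by linarith [(hq 1 le_rfl hK).2, hp.1]) (klBer_pos hp hqK hgt.ne) ?_
  intro k hk
  have hqk : q K ≤ q k := hanti hk ⟨hK, le_rfl⟩ hk.2
  simpa only [klBer_self, sub_zero] using
    (convexOn_klBer hp).secant_mono hp hqK (hq k hk.1 hk.2) hgt.ne' (hgt.trans_le hqk).ne' hqk
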